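/- (Theorem 2, variance formula.) Let Y⁰, Y¹, Yᵃ, Yᵇ be mutually independent random variables, each exponentially distributed with rate 1. Let τ⁰ be the honest random time on [s,t] associated with the intensity λ0 and driven by Y⁰, and let τ¹, τ¹ₐ, τ¹ᵦ be the honest random times on [s,t] associated with the intensity λ1 and driven by Y¹, Yᵃ, Yᵇ respectively. Then Var(exp(-∫_{τ⁰}^t λ1(u) du)) = P(max(τ¹ₐ, τ¹ᵦ) ≤ τ⁰) - P(τ¹ ≤ τ⁰)². -/

import Mathlib

/-! For `y ≥ 0` and `x ∈ [s,t]`, `honestTime s t λ y ≤ x ↔ ∫_x^t λ ≤ y`. Writing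
`g(y) = ∫_{τ⁰(y)}^t λ₁`, the event `τ¹ ≤ τ⁰` is therefore almost surely `{g(Y⁰) ≤ Y¹}`, and
since `Y¹` is an `Exp(1)` variable independent of `Y⁰`, its probability is
`E[P(Y¹ ≥ g(Y⁰) | Y⁰)] = E[exp(-g(Y⁰))]`. Likewise `max(τ¹ₐ, τ¹ᵦ) ≤ τ⁰` has probability
`E[exp(-g(Y⁰))²]`, and the formula is `Var Z = E[Z²] - E[Z]²` for `Z = exp(-g(Y⁰))`. -/

open MeasureTheory ProbabilityTheory Real

/-- The honest random time on `[s,t]` associated with the intensity `lam`,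
driven by the value `y`: `max (s, inf {r ∈ [s,t] : ∫_r^t lam ≤ y})`. -/
noncomputable def honestTime (s t : ℝ) (lam : ℝ → ℝ) (y : ℝ) : ℝ :=
  max s (sInf {r | r ∈ Set.Icc s t ∧ ∫ u in r..t, lam u ≤ y})

open Set

section HonestTime

variable {s t : ℝ} {lam : ℝ → ℝ}

theorem continuous_intervalIntegral_lowerLimit (hlam : Continuous lam) (t : ℝ) :
    Continuous fun x => ∫ u in x..t, lam u := by
  simp only [intervalIntegral.integral_symm t]
  exact (intervalIntegral.continuous_primitive (fun a b => hlam.intervalIntegrable a b) t).neg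

theorem intervalIntegral_nonneg_of_nonneg_on_Icc (hlam_nonneg : ∀ u ∈ Icc s t, 0 ≤ lam u)
    {a b : ℝ} (hsa : s ≤ a) (hab : a ≤ b) (hbt : b ≤ t) : 0 ≤ ∫ u in a..b, lam u :=
  intervalIntegral.integral_nonneg hab fun u hu => hlam_nonneg u ⟨hsa.trans hu.1, hu.2.trans hbt⟩

theorem honestTime_mem_Icc (hst : s ≤ t) (ht : 0 ≤ t) (y : ℝ) :
    honestTime s t lam y ∈ Icc s t := by
  refine ⟨le_max_left _ _, max_le hst ?_⟩
  rcases eq_empty_or_nonempty {r | r ∈ Icc s t ∧ ∫ u in r..t, lam u ≤ y} with hS | ⟨r, hr⟩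
  · rw [hS, Real.sInf_empty]
    exact ht
  · exact (csInf_le ⟨s, fun _ hr' => hr'.1.1⟩ hr).trans hr.1.2

theorem honestTime_le_iff (hlam : Continuous lam) (hst : s ≤ t)
    (hlam_nonneg : ∀ u ∈ Icc s t, 0 ≤ lam u) {x y : ℝ} (hx : x ∈ Icc s t) (hy : 0 ≤ y) :
    honestTime s t lam y ≤ x ↔ ∫ u in x..t, lam u ≤ y := by
  set S : Set ℝ := {r | r ∈ Icc s t ∧ ∫ u in r..t, lam u ≤ y}
  have hbdd : BddBelow S := ⟨s, fun _ hr => hr.1.1⟩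
  refine ⟨fun hle => ?_, fun hxy => max_le hx.1 (csInf_le hbdd ⟨hx, hxy⟩)⟩
  -- The infimum is attained: `t` qualifies since `y ≥ 0`, and the qualifying set is closed.
  have hS_closed : IsClosed S :=
    isClosed_Icc.inter (isClosed_Iic.preimage (continuous_intervalIntegral_lowerLimit hlam t))
  have htS : t ∈ S := ⟨⟨hst, le_rfl⟩, by rwa [intervalIntegral.integral_same]⟩
  have hinf : sInf S ∈ S := hS_closed.csInf_mem ⟨t, htS⟩ hbdd
  have hsplit : (∫ u in (sInf S)..x, lam u) + ∫ u in x..t, lam u = ∫ u in (sInf S)..t, lam u :=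
    intervalIntegral.integral_add_adjacent_intervals
      (hlam.intervalIntegrable _ _) (hlam.intervalIntegrable _ _)
  have hnonneg : 0 ≤ ∫ u in (sInf S)..x, lam u :=
    intervalIntegral_nonneg_of_nonneg_on_Icc hlam_nonneg hinf.1.1 ((le_max_right _ _).trans hle)
      hx.2
  linarith [hinf.2]

theorem honestTime_of_neg (hs : 0 ≤ s) (hlam_nonneg : ∀ u ∈ Icc s t, 0 ≤ lam u) {y : ℝ}
    (hy : y < 0) : honestTime s t lam y = s := by
  have hS : {r | r ∈ Icc s t ∧ ∫ u in r..t, lam u ≤ y} = ∅ :=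
    eq_empty_of_forall_notMem fun r hr =>
      (intervalIntegral_nonneg_of_nonneg_on_Icc hlam_nonneg hr.1.1 hr.1.2 le_rfl).not_gt
        (hr.2.trans_lt hy)
  rw [honestTime, hS, Real.sInf_empty, max_eq_left hs]

theorem honestTime_antitoneOn (hlam : Continuous lam) (hst : s ≤ t) (ht : 0 ≤ t)
    (hlam_nonneg : ∀ u ∈ Icc s t, 0 ≤ lam u) : AntitoneOn (honestTime s t lam) (Ici 0) := by
  intro a ha b hb hab
  have hmem := honestTime_mem_Icc (lam := lam) hst ht a
  rw [honestTime_le_iff hlam hst hlam_nonneg hmem hb]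
  exact ((honestTime_le_iff hlam hst hlam_nonneg hmem ha).1 le_rfl).trans hab

theorem measurable_honestTime (hs : 0 ≤ s) (hst : s ≤ t) (hlam : Continuous lam)
    (hlam_nonneg : ∀ u ∈ Icc s t, 0 ≤ lam u) : Measurable (honestTime s t lam) := by
  have hpiece : honestTime s t lam =
      (Iio 0).piecewise (fun _ => s) (fun y => honestTime s t lam (max y 0)) := by
    funext y
    by_cases hy : y < 0
    · simp [piecewise, hy, honestTime_of_neg hs hlam_nonneg hy]
    · simp [piecewise, hy, max_eq_left (not_lt.1 hy)]
  have hanti : Antitone fun y => honestTime s t lam (max y 0) := fun a b hab =>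
    honestTime_antitoneOn hlam hst (hs.trans hst) hlam_nonneg (le_max_right a 0)
      (le_max_right b 0) (max_le_max hab le_rfl)
  rw [hpiece]
  exact Measurable.piecewise measurableSet_Iio measurable_const hanti.measurable

end HonestTime

section Exponential

theorem expMeasure_Iic_zero {r : ℝ} (hr : 0 < r) : expMeasure r (Iic 0) = 0 := by
  have := isProbabilityMeasure_expMeasure hr
  rw [← ofReal_cdf, cdf_expMeasure_eq hr]
  simp

theorem expMeasure_Ici {r c : ℝ} (hr : 0 < r) (hc : 0 ≤ c) :
    expMeasure r (Ici c) = ENNReal.ofReal (exp (-(r * c))) := by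
  have := isProbabilityMeasure_expMeasure hr
  have hIio : expMeasure r (Iio c) = ENNReal.ofReal (1 - exp (-(r * c))) := by
    have h := lintegral_exponentialPDF_eq_antiDeriv hr c
    rw [if_pos hc, ← setLIntegral_congr Iio_ae_eq_Iic] at h
    rw [← h]
    exact withDensity_apply _ measurableSet_Iio
  have hexp_le : exp (-(r * c)) ≤ 1 := exp_le_one_iff.2 (neg_nonpos.2 (mul_nonneg hr.le hc))
  rw [← compl_Iio, prob_compl_eq_one_sub measurableSet_Iio, hIio, ← ENNReal.ofReal_one,
    ← ENNReal.ofReal_sub _ (sub_nonneg.2 hexp_le), sub_sub_cancel]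

variable {Ω α : Type*} [MeasurableSpace Ω] [MeasurableSpace α] {P : Measure Ω}

theorem ae_pos_of_map_eq_expMeasure {r : ℝ} (hr : 0 < r) {Y : Ω → ℝ} (hY : Measurable Y)
    (hlaw : P.map Y = expMeasure r) : ∀ᵐ ω ∂P, 0 < Y ω := by
  have h : ∀ᵐ y ∂(expMeasure r), 0 < y :=
    measure_mono_null (fun y (hy : ¬0 < y) => show y ∈ Iic 0 from not_lt.1 hy)
      (expMeasure_Iic_zero hr)
  rw [← hlaw] at h
  exact ae_of_ae_map hY.aemeasurable h

theorem ProbabilityTheory.IndepFun.measure_prodMk_preimage [IsFiniteMeasure P] {β : Type*}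
    [MeasurableSpace β] {X : Ω → α} {Y : Ω → β} (hXY : IndepFun X Y P) (hX : Measurable X)
    (hY : Measurable Y) {S : Set (α × β)} (hS : MeasurableSet S) :
    P ((fun ω => (X ω, Y ω)) ⁻¹' S) = ∫⁻ x, P.map Y (Prod.mk x ⁻¹' S) ∂(P.map X) := by
  rw [← Measure.map_apply (hX.prodMk hY) hS,
    (indepFun_iff_map_prod_eq_prod_map_map hX.aemeasurable hY.aemeasurable).1 hXY,
    Measure.prod_apply hS]

theorem integral_comp_eq_toReal_lintegral_map {X : Ω → α} (hX : Measurable X) {f : α → ℝ}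
    (hf : Measurable f) (hf_nonneg : 0 ≤ f) :
    ∫ ω, f (X ω) ∂P = (∫⁻ x, ENNReal.ofReal (f x) ∂(P.map X)).toReal := by
  rw [← integral_map hX.aemeasurable hf.aestronglyMeasurable,
    integral_eq_lintegral_of_nonneg_ae (ae_of_all _ hf_nonneg) hf.aestronglyMeasurable]

variable [IsProbabilityMeasure P] {r : ℝ} {X : Ω → α} {g : α → ℝ}

theorem toReal_measure_le_of_indepFun_expMeasure (hr : 0 < r) {Y : Ω → ℝ}
    (hXY : IndepFun X Y P) (hX : Measurable X) (hY : Measurable Y)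
    (hYlaw : P.map Y = expMeasure r) (hg : Measurable g) (hg_nonneg : 0 ≤ g) :
    (P {ω | g (X ω) ≤ Y ω}).toReal = ∫ ω, exp (-(r * g (X ω))) ∂P := by
  have hS : MeasurableSet {p : α × ℝ | g p.1 ≤ p.2} :=
    measurableSet_le (hg.comp measurable_fst) measurable_snd
  have hP : P {ω | g (X ω) ≤ Y ω} = ∫⁻ x, expMeasure r (Ici (g x)) ∂(P.map X) := by
    rw [← hYlaw]
    exact hXY.measure_prodMk_preimage hX hY hS
  rw [hP, integral_comp_eq_toReal_lintegral_map (f := fun x => exp (-(r * g x))) hX (by fun_prop)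
    fun _ => (exp_pos _).le]
  congr 1
  exact lintegral_congr fun x => expMeasure_Ici hr (hg_nonneg x)

theorem toReal_measure_le_and_le_of_indepFun_expMeasure (hr : 0 < r) {Y Y' : Ω → ℝ}
    (hXY : IndepFun X (fun ω => (Y ω, Y' ω)) P) (hYY' : IndepFun Y Y' P)
    (hX : Measurable X) (hY : Measurable Y) (hY' : Measurable Y')
    (hYlaw : P.map Y = expMeasure r) (hY'law : P.map Y' = expMeasure r)
    (hg : Measurable g) (hg_nonneg : 0 ≤ g) :
    (P {ω | g (X ω) ≤ Y ω ∧ g (X ω) ≤ Y' ω}).toReal = ∫ ω, exp (-(r * g (X ω))) ^ 2 ∂P := by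
  have hS : MeasurableSet {p : α × ℝ × ℝ | g p.1 ≤ p.2.1 ∧ g p.1 ≤ p.2.2} :=
    (measurableSet_le (hg.comp measurable_fst) (measurable_fst.comp measurable_snd)).inter
      (measurableSet_le (hg.comp measurable_fst) (measurable_snd.comp measurable_snd))
  have hlaw : P.map (fun ω => (Y ω, Y' ω)) = (expMeasure r).prod (expMeasure r) := by
    rw [(indepFun_iff_map_prod_eq_prod_map_map hY.aemeasurable hY'.aemeasurable).1 hYY', hYlaw,
      hY'law]
  have hP : P {ω | g (X ω) ≤ Y ω ∧ g (X ω) ≤ Y' ω}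
      = ∫⁻ x, (expMeasure r).prod (expMeasure r) (Ici (g x) ×ˢ Ici (g x)) ∂(P.map X) := by
    rw [← hlaw]
    exact hXY.measure_prodMk_preimage hX (hY.prodMk hY') hS
  rw [hP, integral_comp_eq_toReal_lintegral_map (f := fun x => exp (-(r * g x)) ^ 2) hX
    (by fun_prop) fun _ => sq_nonneg _]
  congr 1
  have := isProbabilityMeasure_expMeasure hr
  refine lintegral_congr fun x => ?_
  rw [Measure.prod_prod, expMeasure_Ici hr (hg_nonneg x), ← ENNReal.ofReal_mul (exp_pos _).le, sq]

theorem variance_exp_neg_eq_of_indepFun_expMeasure (hr : 0 < r) {Y Ya Yb : Ω → ℝ}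
    (hXY : IndepFun X Y P) (hXYab : IndepFun X (fun ω => (Ya ω, Yb ω)) P)
    (hYab : IndepFun Ya Yb P) (hX : Measurable X) (hY : Measurable Y) (hYa : Measurable Ya)
    (hYb : Measurable Yb) (hYlaw : P.map Y = expMeasure r) (hYalaw : P.map Ya = expMeasure r)
    (hYblaw : P.map Yb = expMeasure r) (hg : Measurable g) (hg_nonneg : 0 ≤ g) :
    variance (fun ω => exp (-(r * g (X ω)))) P
      = (P {ω | g (X ω) ≤ Ya ω ∧ g (X ω) ≤ Yb ω}).toReal - (P {ω | g (X ω) ≤ Y ω}).toReal ^ 2 := by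
  have hZ : MemLp (fun ω => exp (-(r * g (X ω)))) 2 P :=
    MemLp.of_bound ((hg.comp hX).const_mul r).neg.exp.aestronglyMeasurable 1
      (ae_of_all _ fun ω => by
        simpa [abs_of_pos (exp_pos _)] using mul_nonneg hr.le (hg_nonneg (X ω)))
  rw [variance_eq_sub hZ, toReal_measure_le_of_indepFun_expMeasure hr hXY hX hY hYlaw hg hg_nonneg,
    toReal_measure_le_and_le_of_indepFun_expMeasure hr hXYab hYab hX hYa hYb hYalaw hYblaw hg
      hg_nonneg]
  rfl

end Exponential

theorem variance_estimator_P11_general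
    {Ω : Type*} [MeasurableSpace Ω] (P : Measure Ω) [IsProbabilityMeasure P]
    (s t : ℝ) (hs : 0 ≤ s) (hst : s < t)
    (lam0 lam1 : ℝ → ℝ) (hlam0 : Continuous lam0) (hlam1 : Continuous lam1)
    (hlam0_nonneg : ∀ u ∈ Set.Icc s t, 0 ≤ lam0 u)
    (hlam1_nonneg : ∀ u ∈ Set.Icc s t, 0 ≤ lam1 u)
    (Y0 Y1 Ya Yb : Ω → ℝ)
    (hY0 : Measurable Y0) (hY1 : Measurable Y1) (hYa : Measurable Ya) (hYb : Measurable Yb)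
    (hY1law : P.map Y1 = expMeasure 1)
    (hYalaw : P.map Ya = expMeasure 1) (hYblaw : P.map Yb = expMeasure 1)
    (hindep : iIndepFun ![Y0, Y1, Ya, Yb] P) :
    variance (fun ω => Real.exp (-(∫ u in (honestTime s t lam0 (Y0 ω))..t, lam1 u))) P
      = (P {ω | max (honestTime s t lam1 (Ya ω)) (honestTime s t lam1 (Yb ω))
            ≤ honestTime s t lam0 (Y0 ω)}).toReal
        - ((P {ω | honestTime s t lam1 (Y1 ω) ≤ honestTime s t lam0 (Y0 ω)}).toReal) ^ 2 := by
  set g : ℝ → ℝ := fun y => ∫ u in (honestTime s t lam0 y)..t, lam1 u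
  have ht : 0 ≤ t := hs.trans hst.le
  have hg : Measurable g := (continuous_intervalIntegral_lowerLimit hlam1 t).measurable.comp
    (measurable_honestTime hs hst.le hlam0 hlam0_nonneg)
  have hg_nonneg : 0 ≤ g := fun y =>
    have hτ := honestTime_mem_Icc (lam := lam0) hst.le ht y
    intervalIntegral_nonneg_of_nonneg_on_Icc hlam1_nonneg hτ.1 hτ.2 le_rfl
  have hle_iff : ∀ {Y : Ω → ℝ}, Measurable Y → P.map Y = expMeasure 1 → ∀ᵐ ω ∂P,
      honestTime s t lam1 (Y ω) ≤ honestTime s t lam0 (Y0 ω) ↔ g (Y0 ω) ≤ Y ω := fun hY hlaw =>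
    (ae_pos_of_map_eq_expMeasure one_pos hY hlaw).mono fun _ hω =>
      honestTime_le_iff hlam1 hst.le hlam1_nonneg (honestTime_mem_Icc hst.le ht _) hω.le
  have h01 : IndepFun Y0 Y1 P := hindep.indepFun (show (0 : Fin 4) ≠ 1 by decide)
  have h0ab : IndepFun Y0 (fun ω => (Ya ω, Yb ω)) P :=
    (hindep.indepFun_prodMk (by simp [Fin.forall_fin_succ, hY0, hY1, hYa, hYb]) 2 3 0
      (by decide) (by decide)).symm
  have hab : IndepFun Ya Yb P := hindep.indepFun (show (2 : Fin 4) ≠ 3 by decide)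
  have hle : {ω | honestTime s t lam1 (Y1 ω) ≤ honestTime s t lam0 (Y0 ω)}
      =ᵐ[P] {ω | g (Y0 ω) ≤ Y1 ω} :=
    Filter.eventuallyEq_set.2 (hle_iff hY1 hY1law)
  have hmax : {ω | max (honestTime s t lam1 (Ya ω)) (honestTime s t lam1 (Yb ω))
      ≤ honestTime s t lam0 (Y0 ω)} =ᵐ[P] {ω | g (Y0 ω) ≤ Ya ω ∧ g (Y0 ω) ≤ Yb ω} := by
    refine Filter.eventuallyEq_set.2 ?_
    filter_upwards [hle_iff hYa hYalaw, hle_iff hYb hYblaw] with ω ha hb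
    exact max_le_iff.trans (and_congr ha hb)
  rw [measure_congr hmax, measure_congr hle]
  simpa only [one_mul] using variance_exp_neg_eq_of_indepFun_expMeasure one_pos h01 h0ab hab
    hY0 hY1 hYa hYb hY1law hYalaw hYblaw hg hg_nonneg

/-- Theorem 2 (variance formula): with `τ⁰` the honest time on `[s,t]` associated with `λ₀`
driven by `Y⁰`, and `τ¹, τ¹ₐ, τ¹ᵦ` the honest times associated with `λ₁` driven by
`Y¹, Yᵃ, Yᵇ`, where `Y⁰, Y¹, Yᵃ, Yᵇ` are mutually independent `Exp(1)` random variables,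
`Var(exp (-∫_{τ⁰}^t λ₁(u) du)) = P(max (τ¹ₐ, τ¹ᵦ) ≤ τ⁰) - P(τ¹ ≤ τ⁰)²`. -/
theorem variance_estimator_P11
    {Ω : Type*} [MeasurableSpace Ω] (P : Measure Ω) [IsProbabilityMeasure P]
    (s t : ℝ) (hs : 0 ≤ s) (hst : s < t)
    (lam0 lam1 : ℝ → ℝ) (hlam0 : Continuous lam0) (hlam1 : Continuous lam1)
    (hlam0_nonneg : ∀ u ∈ Set.Icc s t, 0 ≤ lam0 u)
    (hlam1_nonneg : ∀ u ∈ Set.Icc s t, 0 ≤ lam1 u)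
    (Y0 Y1 Ya Yb : Ω → ℝ)
    (hY0 : Measurable Y0) (hY1 : Measurable Y1) (hYa : Measurable Ya) (hYb : Measurable Yb)
    (hY0law : P.map Y0 = expMeasure 1) (hY1law : P.map Y1 = expMeasure 1)
    (hYalaw : P.map Ya = expMeasure 1) (hYblaw : P.map Yb = expMeasure 1)
    (hindep : iIndepFun ![Y0, Y1, Ya, Yb] P) :
    variance (fun ω => Real.exp (-(∫ u in (honestTime s t lam0 (Y0 ω))..t, lam1 u))) P
      = (P {ω | max (honestTime s t lam1 (Ya ω)) (honestTime s t lam1 (Yb ω))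
            ≤ honestTime s t lam0 (Y0 ω)}).toReal
        - ((P {ω | honestTime s t lam1 (Y1 ω) ≤ honestTime s t lam0 (Y0 ω)}).toReal) ^ 2 :=
  variance_estimator_P11_general P s t hs hst lam0 lam1 hlam0 hlam1 hlam0_nonneg hlam1_nonneg Y0 Y1
    Ya Yb hY0 hY1 hYa hYb hY1law hYalaw hYblaw hindep
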